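/- arXiv:1102.2566 — 3 statements merged into one kernel-verified Lean document; each statement's English description precedes it below -/
import Mathlib

section
/- Let m, n be positive integers, let α₁, …, αₙ be pairwise distinct elements of the field F = GF(2^m), and let G ∈ F[X] be a square-free polynomial such that G(αᵢ) ≠ 0 for all i. Then the binary Goppa codes Γ(L,G) and Γ(L,G²) are equal, i.e., for every c ∈ (F₂)ⁿ, G divides Σᵢ cᵢ·∏_{j≠i}(X − αⱼ) in F[X] if and only if G² divides Σᵢ cᵢ·∏_{j≠i}(X − αⱼ) in F[X]. -/
/-!
Let `s = {i | cᵢ = 1}`, `f = ∏_{i ∈ s} (X - αᵢ)` and `g = ∏_{i ∉ s} (X - αᵢ)`.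
By the product rule the syndrome equals `f' · g`. In characteristic `2` the second derivative of
every polynomial vanishes, so `f'` is a polynomial in `X²`, hence a square `h²` since
Frobenius is surjective on `GF(2^m)`. As `G` has no root among the `αᵢ`, it is coprime to
`g`, so `G ∣ h² g` forces `G ∣ h²`, then `G ∣ h` because `G` is square-free, and finally
`G² ∣ h² g`.
-/

open Polynomial

/-- A word `c` belongs to the binary Goppa code `Γ(L, G)` iff `G` divides this polynomial. -/
noncomputable def goppaSyndrome {m n : ℕ} (α : Fin n → GaloisField 2 m)
    (c : Fin n → ZMod 2) : Polynomial (GaloisField 2 m) :=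
  ∑ i, algebraMap (ZMod 2) (GaloisField 2 m) (c i) •
    ∏ j ∈ Finset.univ \ {i}, (X - C (α j))

namespace Polynomial

theorem iterate_derivative_eq_zero_of_charP {R : Type*} [CommSemiring R] (p : ℕ) [CharP R p]
    (hp : p ≠ 0) (f : R[X]) : derivative^[p] f = 0 := by
  rw [iterate_derivative_eq_factorial_smul_sum, ← Nat.cast_smul_eq_nsmul R,
    (CharP.cast_eq_zero_iff R p _).mpr (Nat.dvd_factorial (Nat.pos_of_ne_zero hp) le_rfl),
    zero_smul]

theorem exists_derivative_eq_sq {R : Type*} [CommRing R] [NoZeroDivisors R] [CharP R 2]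
    [PerfectRing R 2] (f : R[X]) : ∃ h : R[X], derivative f = h ^ 2 := by
  have hf'' : derivative (derivative f) = 0 :=
    iterate_derivative_eq_zero_of_charP 2 two_ne_zero f
  refine ⟨(contract 2 (derivative f)).map (frobeniusEquiv R 2).symm, ?_⟩
  rw [← polynomial_expand_eq, expand_contract 2 hf'' two_ne_zero]

theorem sum_prod_erase_X_sub_C_eq_derivative_mul {R ι : Type*} [CommRing R] [DecidableEq ι]
    {s t : Finset ι} (hst : s ⊆ t) (a : ι → R) :
    ∑ i ∈ s, ∏ j ∈ t.erase i, (X - C (a j)) =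
      derivative (∏ i ∈ s, (X - C (a i))) * ∏ i ∈ t \ s, (X - C (a i)) := by
  rw [derivative_prod_finset, Finset.sum_mul]
  refine Finset.sum_congr rfl fun i hi => ?_
  have hcompl : t.erase i \ s.erase i = t \ s := by grind
  rw [derivative_X_sub_C, mul_one, ← Finset.prod_sdiff (Finset.erase_subset_erase i hst), hcompl,
    mul_comm]

theorem isCoprime_prod_X_sub_C {K ι : Type*} [Field K] {G : K[X]} (s : Finset ι) (a : ι → K)
    (hG : ∀ i ∈ s, G.eval (a i) ≠ 0) : IsCoprime G (∏ i ∈ s, (X - C (a i))) :=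
  IsCoprime.prod_right fun i hi => ((irreducible_X_sub_C (a i)).coprime_iff_not_dvd.mpr
    fun hdvd => hG i hi (dvd_iff_isRoot.mp hdvd)).symm

end Polynomial

theorem Squarefree.dvd_sq_mul_iff {R : Type*} [CommSemiring R] [DecompositionMonoid R]
    {G g h : R} (hG : Squarefree G) (hg : IsCoprime G g) :
    G ∣ h ^ 2 * g ↔ G ^ 2 ∣ h ^ 2 * g := by
  refine ⟨fun hdvd => ?_, (dvd_pow_self G two_ne_zero).trans⟩
  have hGh : G ∣ h := (hG.dvd_pow_iff_dvd two_ne_zero).mp (hg.dvd_of_dvd_mul_right hdvd)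
  exact (pow_dvd_pow_of_dvd hGh 2).mul_right g

theorem algebraMap_zmod_two_smul {A M : Type*} [Semiring A] [Algebra (ZMod 2) A]
    [AddCommMonoid M] [Module A M] (x : ZMod 2) (v : M) :
    algebraMap (ZMod 2) A x • v = if x = 1 then v else 0 := by
  obtain rfl | rfl : x = 0 ∨ x = 1 := by decide +revert
  all_goals simp

theorem goppaSyndrome_eq_derivative_mul {m n : ℕ} (α : Fin n → GaloisField 2 m)
    (c : Fin n → ZMod 2) :
    goppaSyndrome α c = derivative (∏ i with c i = 1, (X - C (α i))) *
      ∏ i with c i ≠ 1, (X - C (α i)) := by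
  rw [Finset.filter_not, ← sum_prod_erase_X_sub_C_eq_derivative_mul (Finset.subset_univ _),
    Finset.sum_filter, goppaSyndrome]
  simp only [algebraMap_zmod_two_smul, Finset.sdiff_singleton_eq_erase]

theorem goppa_code_squarefree_eq_sq_general (m n : ℕ) (α : Fin n → GaloisField 2 m)
    (G : Polynomial (GaloisField 2 m)) (hsq : Squarefree G)
    (hroots : ∀ i, G.eval (α i) ≠ 0) (c : Fin n → ZMod 2) :
    G ∣ goppaSyndrome α c ↔ G ^ 2 ∣ goppaSyndrome α c := by
  classical
  obtain ⟨h, hh⟩ := exists_derivative_eq_sq (∏ i with c i = 1, (X - C (α i)))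
  rw [goppaSyndrome_eq_derivative_mul, hh]
  exact hsq.dvd_sq_mul_iff (isCoprime_prod_X_sub_C _ α fun i _ => hroots i)

/-- If `G` is square-free and vanishes at no support element, then `Γ(L, G) = Γ(L, G²)`. -/
theorem goppa_code_squarefree_eq_sq (m n : ℕ) (hm : 0 < m) (hn : 0 < n)
    (α : Fin n → GaloisField 2 m) (hα : Function.Injective α)
    (G : Polynomial (GaloisField 2 m)) (hsq : Squarefree G)
    (hroots : ∀ i, G.eval (α i) ≠ 0) (c : Fin n → ZMod 2) :
    G ∣ goppaSyndrome α c ↔ G ^ 2 ∣ goppaSyndrome α c :=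
  goppa_code_squarefree_eq_sq_general m n α G hsq hroots c
end

section
/- Let m, n be positive integers, let α₁, …, αₙ be pairwise distinct elements of the field F = GF(2^m), and let G ∈ F[X] be a nonzero polynomial with G(αᵢ) ≠ 0 for all i. Then every nonzero codeword c of the binary Goppa code Γ(L,G) has Hamming weight at least deg G + 1. -/
/-!
Let `S` be the support of `c`. Since the coordinates of `c` are `0` or `1`, the syndrome of `c`
is `Σ_{i ∈ S} ∏_{j ≠ i} (X - αⱼ)`, which by the product rule is `N' * M`, where
`N = ∏_{i ∈ S} (X - αᵢ)` and `M = ∏_{i ∉ S} (X - αᵢ)`. As `G` has no root among the `αᵢ`, it is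
coprime to `M`, so `G ∣ N'`. The derivative `N'` does not vanish at a node `αᵢ` with `i ∈ S`
because the nodes are distinct, so `N' ≠ 0` and `deg G ≤ deg N' ≤ |S| - 1`.
-/

open Polynomial

open Finset Lagrange

section Nodal

theorem sum_nodal_erase_of_subset {R ι : Type*} [CommRing R] [DecidableEq ι] {s t : Finset ι}
    (hst : s ⊆ t) (v : ι → R) :
    ∑ i ∈ s, nodal (t.erase i) v = derivative (nodal s v) * nodal (t \ s) v := by
  rw [derivative_nodal, sum_mul]
  refine sum_congr rfl fun i hi => ?_
  have hsplit : t.erase i = s.erase i ∪ t \ s := by ext j; grind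
  rw [nodal, nodal, nodal, hsplit, prod_union (disjoint_sdiff.mono_left (erase_subset i s))]

variable {K ι : Type*} [Field K] {s : Finset ι} {v : ι → K}

theorem isCoprime_nodal {G : K[X]} (hG : ∀ i ∈ s, G.eval (v i) ≠ 0) :
    IsCoprime G (nodal s v) :=
  IsCoprime.prod_right fun i hi =>
    ((irreducible_X_sub_C (v i)).coprime_iff_not_dvd.2 (by rw [dvd_iff_isRoot]; exact hG i hi)).symm

theorem derivative_nodal_ne_zero [DecidableEq ι] (hvs : Set.InjOn v s) (hs : s.Nonempty) :
    derivative (nodal s v) ≠ 0 := by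
  obtain ⟨i, hi⟩ := hs
  intro hzero
  apply nodalWeight_ne_zero hvs hi
  rw [nodalWeight_eq_eval_derivative_nodal hi, hzero, eval_zero, inv_zero]

end Nodal

theorem goppaSyndrome_eq_derivative_nodal_mul {m n : ℕ} (α : Fin n → GaloisField 2 m)
    (c : Fin n → ZMod 2) :
    goppaSyndrome α c =
      derivative (nodal {i | c i ≠ 0} α) * nodal ({i | c i ≠ 0} : Finset (Fin n))ᶜ α := by
  have hbinary : ∀ x : ZMod 2, x ≠ 0 → x = 1 := by decide
  rw [compl_eq_univ_sdiff, ← sum_nodal_erase_of_subset (subset_univ _), goppaSyndrome,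
    ← sum_filter_of_ne (p := fun i => c i ≠ 0) fun i _ h hci => by simp [hci] at h]
  refine sum_congr rfl fun i hi => ?_
  rw [hbinary _ (mem_filter.1 hi).2, map_one, one_smul, sdiff_singleton_eq_erase, nodal]

theorem goppa_code_min_weight_general (m n : ℕ)
    (α : Fin n → GaloisField 2 m) (hα : Function.Injective α)
    (G : Polynomial (GaloisField 2 m))
    (hroots : ∀ i, G.eval (α i) ≠ 0) (c : Fin n → ZMod 2)
    (hc : c ≠ 0) (hcode : G ∣ goppaSyndrome α c) :
    G.natDegree + 1 ≤ hammingNorm c := by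
  set S : Finset (Fin n) := {i | c i ≠ 0}
  have hS : S.Nonempty := card_pos.1 (hammingNorm_pos_iff.2 hc)
  have hGdvd : G ∣ derivative (nodal S α) :=
    (isCoprime_nodal fun i _ => hroots i).dvd_of_dvd_mul_right
      (goppaSyndrome_eq_derivative_nodal_mul α c ▸ hcode)
  have hdeg : (derivative (nodal S α)).natDegree ≤ #S - 1 :=
    natDegree_nodal (s := S) (v := α) ▸ natDegree_derivative_le _
  calc G.natDegree + 1 ≤ (derivative (nodal S α)).natDegree + 1 := by
        gcongr; exact natDegree_le_of_dvd hGdvd (derivative_nodal_ne_zero hα.injOn hS)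
    _ ≤ #S := by have := hS.card_pos; omega
    _ = hammingNorm c := rfl

/-- Every nonzero codeword of the binary Goppa code `Γ(L, G)` has Hamming weight at least
`deg G + 1`. -/
theorem goppa_code_min_weight (m n : ℕ) (hm : 0 < m) (hn : 0 < n)
    (α : Fin n → GaloisField 2 m) (hα : Function.Injective α)
    (G : Polynomial (GaloisField 2 m)) (hG : G ≠ 0)
    (hroots : ∀ i, G.eval (α i) ≠ 0) (c : Fin n → ZMod 2)
    (hc : c ≠ 0) (hcode : G ∣ goppaSyndrome α c) :
    G.natDegree + 1 ≤ hammingNorm c :=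
  goppa_code_min_weight_general m n α hα G hroots c hc hcode
end

section
/- Let m, n be positive integers, let α₁, …, αₙ be pairwise distinct elements of the field F = GF(2^m), and let G ∈ F[X] be a nonzero polynomial of degree r with G(αᵢ) ≠ 0 for all i. Then the binary Goppa code Γ(L,G), viewed as an F₂-linear subspace of (F₂)ⁿ, has dimension at least n − m·r. -/
open Polynomial

/-- The binary Goppa code `Γ(L, G)` with support `α : Fin n → GF(2^m)` and Goppa polynomial
`G`, as an `F₂`-linear subspace of `(F₂)ⁿ`.  It is the kernel of the `F₂`-linear map sending
`c ∈ (F₂)ⁿ` to the class of `Σᵢ cᵢ · ∏_{j ≠ i} (X - αⱼ)` modulo `G`; thus `c ∈ Γ(L, G)` iff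
`G` divides `Σᵢ cᵢ · ∏_{j ≠ i} (X - αⱼ)` in `GF(2^m)[X]`. -/
noncomputable def goppaCode {m n : ℕ} (α : Fin n → GaloisField 2 m)
    (G : Polynomial (GaloisField 2 m)) : Submodule (ZMod 2) (Fin n → ZMod 2) :=
  LinearMap.ker
    ((Ideal.Quotient.mkₐ (ZMod 2) (Ideal.span {G})).toLinearMap.comp
      (Fintype.linearCombination (ZMod 2)
        (fun i => ∏ j ∈ Finset.univ \ {i}, (X - C (α j)))))

/-!
`Γ(L, G)` is the kernel of an `F₂`-linear map from `(F₂)ⁿ` to `F[X] ⧸ (G)`. The target has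
dimension `deg G` over `F`, hence `m · deg G` over `F₂`, so by rank–nullity the kernel has
dimension at least `n - m · deg G`.
-/

theorem LinearMap.finrank_sub_finrank_le_finrank_ker {K V W : Type*} [DivisionRing K]
    [AddCommGroup V] [Module K V] [AddCommGroup W] [Module K W]
    [FiniteDimensional K V] [FiniteDimensional K W] (f : V →ₗ[K] W) :
    Module.finrank K V - Module.finrank K W ≤ Module.finrank K (LinearMap.ker f) := by
  have hrank := f.finrank_range_add_finrank_ker
  have hrange : Module.finrank K (LinearMap.range f) ≤ Module.finrank K W :=
    Submodule.finrank_le _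
  omega

theorem finiteDimensional_quotient_span_singleton (K : Type*) {F : Type*} [Field K] [Field F]
    [Algebra K F] [FiniteDimensional K F] {G : F[X]} (hG : G ≠ 0) :
    FiniteDimensional K (F[X] ⧸ Ideal.span {G}) :=
  haveI : FiniteDimensional F (F[X] ⧸ Ideal.span {G}) := (AdjoinRoot.powerBasis hG).finite
  Module.Finite.trans F _

theorem finrank_quotient_span_eq_finrank_mul_natDegree (K : Type*) {F : Type*} [Field K]
    [Field F] [Algebra K F] (G : F[X]) :
    Module.finrank K (F[X] ⧸ Ideal.span {G}) = Module.finrank K F * G.natDegree := by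
  rw [← Module.finrank_mul_finrank K F, finrank_quotient_span_eq_natDegree]

theorem goppa_code_dimension_general (m n : ℕ) (hm : 0 < m)
    (α : Fin n → GaloisField 2 m)
    (G : Polynomial (GaloisField 2 m)) (hG : G ≠ 0) :
    n - m * G.natDegree ≤ Module.finrank (ZMod 2) (goppaCode α G) := by
  have := finiteDimensional_quotient_span_singleton (ZMod 2) hG
  have hquot :
      Module.finrank (ZMod 2) ((GaloisField 2 m)[X] ⧸ Ideal.span {G}) = m * G.natDegree := by
    rw [finrank_quotient_span_eq_finrank_mul_natDegree, GaloisField.finrank 2 hm.ne']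
  unfold goppaCode
  simpa only [Module.finrank_fin_fun, hquot] using
    LinearMap.finrank_sub_finrank_le_finrank_ker
      ((Ideal.Quotient.mkₐ (ZMod 2) (Ideal.span {G})).toLinearMap.comp
        (Fintype.linearCombination (ZMod 2) fun i => ∏ j ∈ Finset.univ \ {i}, (X - C (α j))))

/-- The binary Goppa code `Γ(L, G)` with a Goppa polynomial of degree `r` has `F₂`-dimension
at least `n - m·r`. -/
theorem goppa_code_dimension (m n : ℕ) (hm : 0 < m) (hn : 0 < n)
    (α : Fin n → GaloisField 2 m) (hα : Function.Injective α)
    (G : Polynomial (GaloisField 2 m)) (hG : G ≠ 0)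
    (hroots : ∀ i, G.eval (α i) ≠ 0) :
    n - m * G.natDegree ≤ Module.finrank (ZMod 2) (goppaCode α G) :=
  goppa_code_dimension_general m n hm α G hG
end
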